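/- Let G be a finite simple graph of order n ≥ 2 and let k be an integer with 1 ≤ k ≤ C(G). Then adim_k(G) = k if and only if k ∈ {1,2} and G is isomorphic to one of the following four graphs: the path P_2, the path P_3, the complement of P_2 (two isolated vertices), or the complement of P_3 (the disjoint union of an edge and an isolated vertex). -/

import Mathlib

open Finset

namespace AdjDim

noncomputable section
open Classical

variable {V W : Type*}

/-- Truncated distance `d_{G,2}(x,y) = min(d_G(x,y), 2)`:
`0` if `x = y`, `1` if `x` and `y` are adjacent, and `2` otherwise. -/
def d2 (G : SimpleGraph V) (x y : V) : ℕ :=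
  if x = y then 0 else if G.Adj x y then 1 else 2

/-- `S` is a `k`-adjacency generator for `G`: every pair of distinct vertices is
distinguished (w.r.t. `d_{G,2}`) by at least `k` vertices of `S`. -/
def IsKAdjGen (G : SimpleGraph V) [Fintype V] (k : ℕ) (S : Finset V) : Prop :=
  ∀ x y : V, x ≠ y → k ≤ (S.filter (fun w => d2 G x w ≠ d2 G y w)).card

/-- The `k`-adjacency dimension of `G`: the minimum cardinality of a
`k`-adjacency generator. -/
def adim (G : SimpleGraph V) [Fintype V] (k : ℕ) : ℕ :=
  sInf {n | ∃ S : Finset V, IsKAdjGen G k S ∧ S.card = n}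

/-- `B` is a `k`-adjacency basis of `G`: a `k`-adjacency generator of minimum
cardinality. -/
def IsKAdjBasis (G : SimpleGraph V) [Fintype V] (k : ℕ) (B : Finset V) : Prop :=
  IsKAdjGen G k B ∧ B.card = adim G k

/-- `G` is `k`-adjacency dimensional: `k` is the largest integer for which a
`k`-adjacency generator exists. -/
def IsKAdjDimensional (G : SimpleGraph V) [Fintype V] (k : ℕ) : Prop :=
  (∃ S : Finset V, IsKAdjGen G k S) ∧
    ∀ k' : ℕ, k < k' → ¬ ∃ S : Finset V, IsKAdjGen G k' S

/-- `C_G(x,y)`: the set of vertices distinguishing `x` and `y` w.r.t. `d_{G,2}`. -/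
def CSet (G : SimpleGraph V) [Fintype V] (x y : V) : Finset V :=
  univ.filter (fun z => d2 G x z ≠ d2 G y z)

/-- `C(G) = min_{x ≠ y} |C_G(x,y)|`. -/
def Cmin (G : SimpleGraph V) [Fintype V] : ℕ :=
  sInf {m | ∃ x y : V, x ≠ y ∧ (CSet G x y).card = m}

/-- `C_k(G)`: the union of the sets `C_G(x,y)` over pairs of distinct vertices
with `|C_G(x,y)| = k`. -/
def Ck (G : SimpleGraph V) [Fintype V] (k : ℕ) : Finset V :=
  univ.filter (fun z => ∃ x y : V, x ≠ y ∧ (CSet G x y).card = k ∧ z ∈ CSet G x y)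

/-- Two distinct vertices `x, y` are twins: every other vertex is at the same
truncated distance from both. -/
def Twins (G : SimpleGraph V) (x y : V) : Prop :=
  x ≠ y ∧ ∀ z : V, z ≠ x → z ≠ y → d2 G x z = d2 G y z

/-- The join `G + H` of two vertex-disjoint graphs. -/
def join (G : SimpleGraph V) (H : SimpleGraph W) : SimpleGraph (V ⊕ W) where
  Adj x y :=
    match x, y with
    | Sum.inl a, Sum.inl b => G.Adj a b
    | Sum.inr a, Sum.inr b => H.Adj a b
    | Sum.inl _, Sum.inr _ => True
    | Sum.inr _, Sum.inl _ => True
  symm := by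
    constructor
    rintro (a | a) (b | b) h
    · exact G.adj_symm h
    · trivial
    · trivial
    · exact H.adj_symm h
  loopless := by
    constructor
    rintro (a | a) h
    · exact G.irrefl h
    · exact H.irrefl h

/-- `K_1 + H`: the join of a one-vertex graph with `H`, i.e. `H` together with a
new universal vertex. -/
def K1join (H : SimpleGraph W) : SimpleGraph (Unit ⊕ W) :=
  join (⊥ : SimpleGraph Unit) H

/-!
If `adim_k(G) = k`, a basis `S` has exactly `k` elements while every pair of vertices is
distinguished by at least `k` of them, so each `w ∈ S` distinguishes all pairs on its own:
`x ↦ d_{G,2}(x, w)` is injective with values in `{0, 1, 2}`. Hence `G` has at most three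
vertices. With three, `w` has a neighbour `a` and a non-neighbour `b`, and `a`, `b` cannot both
distinguish all pairs as well, so `k ≤ 2`; the graphs left are `P₂`, `P̄₂`, `P₃`, `P̄₃`.
Conversely each of these has a 2-adjacency generator of size 2, and deleting one of its vertices
gives a 1-adjacency generator, while any `k`-adjacency generator has at least `k` vertices.
-/

open SimpleGraph Function

section TruncatedDistance

variable {G : SimpleGraph V}

lemma d2_self (x : V) : d2 G x x = 0 := if_pos rfl

lemma d2_comm (x y : V) : d2 G x y = d2 G y x := by
  unfold d2
  by_cases h : x = y
  · simp [h]
  · simp [h, Ne.symm h, G.adj_comm]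

lemma d2_le_two (x y : V) : d2 G x y ≤ 2 := by
  unfold d2; split_ifs <;> omega

lemma d2_eq_zero_iff {x y : V} : d2 G x y = 0 ↔ x = y := by
  unfold d2; split_ifs <;> simp_all

lemma d2_eq_one_iff {x y : V} : d2 G x y = 1 ↔ G.Adj x y := by
  unfold d2; split_ifs with h <;> simp_all

lemma d2_eq_two_iff {x y : V} : d2 G x y = 2 ↔ x ≠ y ∧ ¬G.Adj x y := by
  unfold d2; split_ifs <;> simp_all

lemma d2_iso {H : SimpleGraph W} (e : G ≃g H) (x y : V) : d2 H (e x) (e y) = d2 G x y := by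
  simp only [d2, e.apply_eq_iff_eq, e.map_adj_iff]

end TruncatedDistance

section Generators

variable [Fintype V] {G : SimpleGraph V} {k : ℕ} {S : Finset V}

lemma IsKAdjGen.le_card (hS : IsKAdjGen G k S) {x y : V} (hxy : x ≠ y) : k ≤ S.card :=
  (hS x y hxy).trans (card_filter_le _ _)

lemma IsKAdjGen.erase (hS : IsKAdjGen G (k + 1) S) (s : V) : IsKAdjGen G k (S.erase s) := by
  intro x y hxy
  rw [filter_erase]
  have := hS x y hxy
  have := pred_card_le_card_erase (s := S.filter (fun w => d2 G x w ≠ d2 G y w)) (a := s)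
  omega

lemma IsKAdjGen.comap [Fintype W] {H : SimpleGraph W} (e : G ≃g H) {T : Finset W}
    (hT : IsKAdjGen H k T) : IsKAdjGen G k (T.map e.symm.toEquiv.toEmbedding) := by
  intro x y hxy
  rw [filter_map, card_map]
  convert hT (e x) (e y) (e.injective.ne hxy) using 3 with w
  simp [← d2_iso e x, ← d2_iso e y]

lemma isKAdjGen_two_univ : IsKAdjGen G 2 univ := by
  intro x y hxy
  refine one_lt_card.mpr ⟨x, ?_, y, ?_, hxy⟩ <;>
    simp [d2_self, eq_comm (a := 0), d2_eq_zero_iff, hxy, Ne.symm hxy]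

/-- `Injective (d2 G · w)` says that `w` alone distinguishes every pair of vertices. -/
lemma isKAdjGen_card_of_injective (hS : ∀ w ∈ S, Injective (d2 G · w)) :
    IsKAdjGen G S.card S := by
  intro x y hxy
  rw [filter_true_of_mem fun w hw => (hS w hw).ne hxy]

lemma IsKAdjGen.injective_d2 (hS : IsKAdjGen G k S) (hcard : S.card ≤ k) {w : V}
    (hw : w ∈ S) : Injective (d2 G · w) := by
  intro x y hxy
  by_contra hne
  have hsub : S.filter (fun w => d2 G x w ≠ d2 G y w) ⊂ S :=
    filter_ssubset.mpr ⟨w, hw, not_not.mpr hxy⟩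
  have := card_lt_card hsub
  have := hS x y hne
  omega

lemma two_le_card_of_adim_ne_zero (h : adim G k ≠ 0) : 2 ≤ Fintype.card V := by
  by_contra! hV
  refine h (Nat.sInf_eq_zero.mpr (Or.inl ⟨∅, fun x y hxy => ?_, card_empty⟩))
  exact absurd (Fintype.card_le_one_iff.mp (by omega) x y) hxy

lemma exists_isKAdjGen_card_eq_adim (h : adim G k ≠ 0) :
    ∃ S : Finset V, IsKAdjGen G k S ∧ S.card = adim G k :=
  Nat.sInf_mem (Nat.nonempty_of_pos_sInf (Nat.pos_of_ne_zero h))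

lemma adim_le_card (hS : IsKAdjGen G k S) : adim G k ≤ S.card :=
  Nat.sInf_le ⟨S, hS, rfl⟩

lemma IsKAdjGen.le_adim (hS : IsKAdjGen G k S) {x y : V} (hxy : x ≠ y) : k ≤ adim G k :=
  le_csInf ⟨_, S, hS, rfl⟩ fun _ ⟨_, hU, hUn⟩ => hUn ▸ hU.le_card hxy

lemma adim_eq_of_isKAdjGen_two (hS : IsKAdjGen G 2 S) (hcard : S.card = 2)
    (hk : k = 1 ∨ k = 2) : adim G k = k := by
  obtain ⟨x, y, hxy, rfl⟩ := card_eq_two.mp hcard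
  obtain ⟨T, hT, hTk⟩ : ∃ T : Finset V, IsKAdjGen G k T ∧ T.card = k := by
    rcases hk with rfl | rfl
    · exact ⟨_, hS.erase x, by rw [card_erase_of_mem (mem_insert_self x _), hcard]⟩
    · exact ⟨_, hS, hcard⟩
  exact le_antisymm ((adim_le_card hT).trans hTk.le) (hT.le_adim hxy)

end Generators

section SmallGraphs

variable [Fintype V] {G : SimpleGraph V} {k : ℕ} {S : Finset V}

lemma image_d2_subset_range (w : V) : univ.image (d2 G · w) ⊆ range 3 := by
  intro n hn
  obtain ⟨x, -, rfl⟩ := mem_image.mp hn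
  exact mem_range.mpr (Nat.lt_succ_of_le (d2_le_two x w))

lemma card_le_three_of_injective_d2 {w : V} (hw : Injective (d2 G · w)) :
    Fintype.card V ≤ 3 := by
  simpa [card_image_of_injective _ hw] using card_le_card (image_d2_subset_range (G := G) w)

lemma exists_d2_eq_one_two (hV : Fintype.card V = 3) {w : V} (hw : Injective (d2 G · w)) :
    ∃ a b, d2 G a w = 1 ∧ d2 G b w = 2 := by
  have himage : univ.image (d2 G · w) = range 3 :=
    eq_of_subset_of_card_le (image_d2_subset_range w)
      (by simp [card_image_of_injective _ hw, hV])
  have h1 : 1 ∈ univ.image (d2 G · w) := himage ▸ by simp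
  have h2 : 2 ∈ univ.image (d2 G · w) := himage ▸ by simp
  simp only [mem_image, mem_univ, true_and] at h1 h2
  exact ⟨h1.choose, h2.choose, h1.choose_spec, h2.choose_spec⟩

lemma exists_not_injective_d2 (hV : Fintype.card V = 3) : ∃ v, ¬Injective (d2 G · v) := by
  by_contra! hall
  obtain ⟨w⟩ : Nonempty V := Fintype.card_pos_iff.mp (by omega)
  obtain ⟨a, b, ha, hb⟩ := exists_d2_eq_one_two hV (hall w)
  have hba : d2 G b a ≠ 1 := fun h => by
    have := hall a (h.trans ((d2_comm w a).trans ha).symm)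
    simp [this, d2_self] at hb
  have hab : d2 G a b ≠ 2 := fun h => by
    have := hall b (h.trans ((d2_comm w b).trans hb).symm)
    simp [this, d2_self] at ha
  have : d2 G b a ≠ 0 := fun h => by simp [d2_eq_zero_iff.mp h, ha] at hb
  have := d2_le_two (G := G) b a
  exact hab (by rw [d2_comm]; omega)

lemma IsKAdjGen.card_le_two (hS : IsKAdjGen G k S) (hcard : S.card ≤ k)
    (hV : Fintype.card V = 3) : S.card ≤ 2 := by
  by_contra! hS3
  have := card_le_univ S
  obtain ⟨v, hv⟩ := exists_not_injective_d2 (G := G) hV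
  exact hv (hS.injective_d2 hcard (eq_univ_of_card S (by omega) ▸ mem_univ v))

lemma nonempty_iso_of_injective [Fintype W] {H : SimpleGraph W}
    (hcard : Fintype.card W = Fintype.card V) (f : W → V) (hf : Injective f)
    (hadj : ∀ i j, G.Adj (f i) (f j) ↔ H.Adj i j) : Nonempty (G ≃g H) :=
  ⟨(⟨Equiv.ofBijective f ((Fintype.bijective_iff_injective_and_card f).mpr ⟨hf, hcard⟩),
    hadj _ _⟩ : H ≃g G).symm⟩

lemma iso_pathGraph_two_or_compl (hV : Fintype.card V = 2) :
    Nonempty (G ≃g pathGraph 2) ∨ Nonempty (G ≃g (pathGraph 2)ᶜ) := by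
  obtain ⟨x, y, hxy, -⟩ := card_eq_two.mp (card_univ.trans hV)
  have hf : Injective ![x, y] := by
    intro i j h; fin_cases i <;> fin_cases j <;> simp_all [Ne.symm hxy]
  by_cases hadj : G.Adj x y
  · refine .inl (nonempty_iso_of_injective (by simp [hV]) _ hf ?_)
    intro i j; fin_cases i <;> fin_cases j <;> simp [pathGraph_adj, hadj, hadj.symm]
  · refine .inr (nonempty_iso_of_injective (by simp [hV]) _ hf ?_)
    intro i j; fin_cases i <;> fin_cases j <;>
      simp [pathGraph_adj, hadj, G.adj_comm y x]

lemma iso_pathGraph_three_or_compl (hV : Fintype.card V = 3) {w : V}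
    (hw : Injective (d2 G · w)) :
    Nonempty (G ≃g pathGraph 3) ∨ Nonempty (G ≃g (pathGraph 3)ᶜ) := by
  obtain ⟨a, b, ha, hb⟩ := exists_d2_eq_one_two hV hw
  rw [d2_comm] at ha hb
  have hwa := d2_eq_one_iff.mp ha
  obtain ⟨hwb, hwb'⟩ := d2_eq_two_iff.mp hb
  by_cases hab : G.Adj a b
  · refine .inl (nonempty_iso_of_injective (by simp [hV]) ![w, a, b] ?_ ?_)
    · intro i j h
      have := congrArg (d2 G w) h
      fin_cases i <;> fin_cases j <;> simp_all [d2_self]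
    · intro i j
      fin_cases i <;> fin_cases j <;>
        simp [pathGraph_adj, hwa, hwb', hab, G.adj_comm _ w, G.adj_comm b a]
  · refine .inr (nonempty_iso_of_injective (by simp [hV]) ![a, b, w] ?_ ?_)
    · intro i j h
      have := congrArg (d2 G w) h
      fin_cases i <;> fin_cases j <;> simp_all [d2_self]
    · intro i j
      fin_cases i <;> fin_cases j <;>
        simp [pathGraph_adj, hwa, hwb', hab, G.adj_comm _ w, G.adj_comm b a]

lemma isKAdjGen_pathGraph_three : IsKAdjGen (pathGraph 3) 2 {0, 2} :=
  isKAdjGen_card_of_injective (S := {0, 2}) <| by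
    intro w hw i j h
    simp only [mem_insert, mem_singleton] at hw
    rcases hw with rfl | rfl <;> fin_cases i <;> fin_cases j <;> simp_all [d2, pathGraph_adj]

lemma isKAdjGen_compl_pathGraph_three : IsKAdjGen (pathGraph 3)ᶜ 2 {0, 2} :=
  isKAdjGen_card_of_injective (S := {0, 2}) <| by
    intro w hw i j h
    simp only [mem_insert, mem_singleton] at hw
    rcases hw with rfl | rfl <;> fin_cases i <;> fin_cases j <;> simp_all [d2, pathGraph_adj]

end SmallGraphs

theorem adim_eq_k_iff_general [Fintype V] (G : SimpleGraph V)
    (k : ℕ) (hk1 : 1 ≤ k) :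
    adim G k = k ↔
      (k = 1 ∨ k = 2) ∧
        (Nonempty (G ≃g SimpleGraph.pathGraph 2) ∨
          Nonempty (G ≃g SimpleGraph.pathGraph 3) ∨
          Nonempty (G ≃g (SimpleGraph.pathGraph 2)ᶜ) ∨
          Nonempty (G ≃g (SimpleGraph.pathGraph 3)ᶜ)) := by
  constructor
  · intro hadim
    obtain ⟨S, hS, hSk⟩ := exists_isKAdjGen_card_eq_adim (G := G) (k := k) (by omega)
    rw [hadim] at hSk
    obtain ⟨w, hw⟩ := card_pos.mp (show 0 < S.card by omega)
    have hinj := hS.injective_d2 hSk.le hw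
    have hV2 := two_le_card_of_adim_ne_zero (G := G) (k := k) (by omega)
    have hV3 := card_le_three_of_injective_d2 hinj
    obtain hV | hV : Fintype.card V = 2 ∨ Fintype.card V = 3 := by omega
    · have := hSk ▸ card_le_univ S
      refine ⟨by omega, ?_⟩
      rcases iso_pathGraph_two_or_compl (G := G) hV with h | h <;> simp [h]
    · have := hS.card_le_two hSk.le hV
      refine ⟨by omega, ?_⟩
      rcases iso_pathGraph_three_or_compl hV hinj with h | h <;> simp [h]
  · rintro ⟨hk, hG⟩
    obtain ⟨S, hS, hS2⟩ : ∃ S : Finset V, IsKAdjGen G 2 S ∧ S.card = 2 := by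
      rcases hG with h | h | h | h <;> obtain ⟨e⟩ := h
      · exact ⟨_, isKAdjGen_two_univ.comap e, by rw [card_map]; rfl⟩
      · exact ⟨_, isKAdjGen_pathGraph_three.comap e, by rw [card_map]; rfl⟩
      · exact ⟨_, isKAdjGen_two_univ.comap e, by rw [card_map]; rfl⟩
      · exact ⟨_, isKAdjGen_compl_pathGraph_three.comap e, by rw [card_map]; rfl⟩
    exact adim_eq_of_isKAdjGen_two hS hS2 hk

/-- Proposition 3.7: `adim_k(G) = k` if and only if `k ∈ {1,2}` and `G` is one
of `P₂`, `P₃`, `P̄₂`, `P̄₃`. -/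
theorem adim_eq_k_iff [Fintype V] (G : SimpleGraph V) (h : 2 ≤ Fintype.card V)
    (k : ℕ) (hk1 : 1 ≤ k) (hk2 : k ≤ Cmin G) :
    adim G k = k ↔
      (k = 1 ∨ k = 2) ∧
        (Nonempty (G ≃g SimpleGraph.pathGraph 2) ∨
          Nonempty (G ≃g SimpleGraph.pathGraph 3) ∨
          Nonempty (G ≃g (SimpleGraph.pathGraph 2)ᶜ) ∨
          Nonempty (G ≃g (SimpleGraph.pathGraph 3)ᶜ)) :=
  adim_eq_k_iff_general G k hk1

end
end AdjDim
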